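/- The set system B = {{a,b},{a,c,d},{a,c,e},{a,b,d,e},{b,c,d,e}} on N = {a,b,c,d,e} is min-balanced on N (with coefficients 1/4,1/4,1/4,1/4,1/2 respectively) and is irreducible. -/

import Mathlib

open Finset

variable {ι : Type*} [DecidableEq ι]

/-- The 0/1 indicator vector of a finite set `S`. -/
def chi (S : Finset ι) : ι → ℝ := fun i => if i ∈ S then 1 else 0

/-- `B` is a min-balanced system: there are strictly positive coefficients expressing the
indicator of the carrier `⋃B` as a combination of the indicators of members of `B`, and
those indicator vectors are linearly independent. -/
def MinBalanced (B : Finset (Finset ι)) : Prop :=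
  B.Nonempty ∧
  (∃ lam : Finset ι → ℝ, (∀ S ∈ B, 0 < lam S) ∧
      ∀ i, chi (B.sup id) i = ∑ S ∈ B, lam S * chi S i) ∧
  LinearIndependent ℝ (fun S : {x // x ∈ B} => chi (S.1 : Finset ι))

/-- `v` lies in the conic hull of the indicator vectors of the members of `B`. -/
def inConicHull (B : Finset (Finset ι)) (v : ι → ℝ) : Prop :=
  ∃ lam : Finset ι → ℝ, (∀ S ∈ B, 0 ≤ lam S) ∧
    ∀ i, v i = ∑ S ∈ B, lam S * chi S i

/-- A min-balanced system `B` is reducible if there are `A ⊊ ⋃B` and `B₀ ∈ B` with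
`B₀ ⊊ A` such that `χ_A` is in the conic hull of the indicators of `{S ∈ B : S ⊊ A}`
and `χ_{⋃B}` is in the conic hull of the indicators of `{A} ∪ (B \ {B₀})`. -/
def Reducible (B : Finset (Finset ι)) : Prop :=
  ∃ A : Finset ι, A ⊂ B.sup id ∧
    ∃ B₀ ∈ B.filter (fun S => S ⊂ A),
      inConicHull (B.filter (fun S => S ⊂ A)) (chi A) ∧
      inConicHull (insert A (B.erase B₀)) (chi (B.sup id))

/-- The concrete system on `N = {a,b,c,d,e}` (encoded as `Fin 5`). -/
def B19 : Finset (Finset (Fin 5)) :=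
  {{0,1}, {0,2,3}, {0,2,4}, {0,1,3,4}, {1,2,3,4}}

/-- The witnessing coefficients: 1/2 on `{b,c,d,e}`, 1/4 on the other members. -/
noncomputable def lam19 : Finset (Fin 5) → ℝ :=
  fun S => if S = ({1,2,3,4} : Finset (Fin 5)) then 1/2 else 1/4

/-! The balancing identity and the linear independence of the five indicator vectors are direct
coordinate computations. For irreducibility already the first condition of reducibility fails:
the proper subsets `A ⊊ N` strictly containing a member of `B` are exactly seven, and for each
of them an integer vector `y` with `∑_{i ∈ S} y i ≥ 0` for all `S ∈ B_A` but `∑_{i ∈ A} y i < 0`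
separates `χ_A` from the cone spanned by `B_A` (the easy direction of Farkas' lemma). -/

section Certificate

variable [Fintype ι]

theorem sum_mul_chi (y : ι → ℝ) (S : Finset ι) : ∑ i, y i * chi S i = ∑ i ∈ S, y i := by
  simp [chi]

theorem not_inConicHull_chi_of_certificate {F : Finset (Finset ι)} {A : Finset ι} (y : ι → ℤ)
    (hF : ∀ S ∈ F, 0 ≤ ∑ i ∈ S, y i) (hA : ∑ i ∈ A, y i < 0) : ¬ inConicHull F (chi A) := by
  rintro ⟨lam, hlam, hcomb⟩
  have : (0 : ℝ) ≤ ∑ i ∈ A, (y i : ℝ) := calc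
    0 ≤ ∑ S ∈ F, lam S * ∑ i, (y i : ℝ) * chi S i :=
      sum_nonneg fun S hS => mul_nonneg (hlam S hS) (by rw [sum_mul_chi]; exact_mod_cast hF S hS)
    _ = ∑ i, ∑ S ∈ F, (y i : ℝ) * (lam S * chi S i) := by
      simp_rw [mul_sum, mul_left_comm (lam _)]
      exact sum_comm
    _ = ∑ i, (y i : ℝ) * chi A i := by simp_rw [hcomb, mul_sum]
    _ = ∑ i ∈ A, (y i : ℝ) := sum_mul_chi _ A
  exact this.not_gt (by exact_mod_cast hA)

end Certificate

theorem sup_B19 : B19.sup id = univ := by decide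

theorem lam19_pos : ∀ S ∈ B19, 0 < lam19 S := fun S _ => by
  unfold lam19
  split <;> norm_num

theorem lam19_balances : ∀ i, chi (univ : Finset (Fin 5)) i = ∑ S ∈ B19, lam19 S * chi S i := by
  intro i
  fin_cases i <;> norm_num +decide [B19, lam19, chi]

theorem linearIndepOn_chi_B19 : LinearIndepOn ℝ chi (B19 : Set (Finset (Fin 5))) := by
  rw [linearIndepOn_finset_iff]
  intro g hg
  simp +decide only [B19, mem_insert, mem_singleton, sum_insert, sum_singleton, funext_iff,
    Pi.add_apply, Pi.smul_apply, Pi.zero_apply, chi, smul_eq_mul, mul_ite, mul_one, mul_zero,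
    Fin.forall_fin_succ, ↓reduceIte, add_zero, zero_add, IsEmpty.forall_iff, and_true] at hg
  obtain ⟨ha, hb, hc, hd, he⟩ := hg
  simp only [B19, mem_insert, mem_singleton]
  rintro S (rfl | rfl | rfl | rfl | rfl) <;> linarith

theorem mem_of_ssubset_univ_of_filter_nonempty_B19 (A : Finset (Fin 5)) (hA : A ⊂ univ)
    (hB : (B19.filter (· ⊂ A)).Nonempty) :
    A ∈ ({{0,1,2}, {0,1,3}, {0,1,4}, {0,1,3,4}, {0,1,2,3}, {0,1,2,4}, {0,2,3,4}} :
      Finset (Finset (Fin 5))) := by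
  revert A
  decide

theorem not_reducible_B19 : ¬ Reducible B19 := by
  rintro ⟨A, hA, B₀, hB₀, hcone, -⟩
  rw [sup_B19] at hA
  have hA' := mem_of_ssubset_univ_of_filter_nonempty_B19 A hA ⟨B₀, hB₀⟩
  simp only [mem_insert, mem_singleton] at hA'
  rcases hA' with rfl | rfl | rfl | rfl | rfl | rfl | rfl
  · exact not_inConicHull_chi_of_certificate ![0, 0, -1, 0, 0] (by decide) (by decide) hcone
  · exact not_inConicHull_chi_of_certificate ![0, 0, 0, -1, 0] (by decide) (by decide) hcone
  · exact not_inConicHull_chi_of_certificate ![0, 0, 0, 0, -1] (by decide) (by decide) hcone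
  · exact not_inConicHull_chi_of_certificate ![0, 0, 0, -1, 0] (by decide) (by decide) hcone
  · exact not_inConicHull_chi_of_certificate ![1, -1, -1, 0, 0] (by decide) (by decide) hcone
  · exact not_inConicHull_chi_of_certificate ![1, -1, -1, 0, 0] (by decide) (by decide) hcone
  · exact not_inConicHull_chi_of_certificate ![1, 0, 0, -1, -1] (by decide) (by decide) hcone

theorem stmt19 :
    MinBalanced B19 ∧ B19.sup id = Finset.univ ∧
    (∀ S ∈ B19, 0 < lam19 S) ∧
    (∀ i, chi (Finset.univ : Finset (Fin 5)) i = ∑ S ∈ B19, lam19 S * chi S i) ∧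
    ¬ Reducible B19 := by
  exact ⟨⟨by decide, ⟨lam19, lam19_pos, sup_B19 ▸ lam19_balances⟩, linearIndepOn_chi_B19⟩,
    sup_B19, lam19_pos, lam19_balances, not_reducible_B19⟩
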